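/- Let h ≥ 0 and let π be a permutation of {1,…,h}. Let β be the join of the join-congruences cg(1,π(1)), …, cg(h,π(h)) of the grid K_{h,h}. Then the number of equivalence classes of β equals h + 1 + inv(π). -/

import Mathlib

/-- The grid `K_{m,n}`: the lattice `{0,…,m} × {0,…,n}` ordered componentwise
(join and meet are componentwise max and min). -/
abbrev Grid (m n : ℕ) := Fin (m + 1) × Fin (n + 1)

/-- A join-congruence of a join-semilattice: an equivalence relation compatible with
joining a fixed element. -/
def IsJoinCong {α : Type*} [SemilatticeSup α] (r : α → α → Prop) : Prop :=
  Equivalence r ∧ ∀ a b c : α, r a b → r (a ⊔ c) (b ⊔ c)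

/-- The join-congruence generated by a relation `R`: the smallest join-congruence
containing `R` (the intersection of all join-congruences containing `R`). -/
def joinCongGen {α : Type*} [SemilatticeSup α] (R : α → α → Prop) : α → α → Prop :=
  fun a b => ∀ r : α → α → Prop, IsJoinCong r → (∀ x y, R x y → r x y) → r a b

/-- The join of a family of join-congruences: the smallest join-congruence containing
all members of the family. -/
def joinCongSup {α : Type*} [SemilatticeSup α] {ι : Sort*} (f : ι → α → α → Prop) :
    α → α → Prop :=
  joinCongGen fun a b => ∃ i, f i a b

open Fin.NatCast

/-- For `1 ≤ i ≤ m` and `1 ≤ j ≤ n`, the join-congruence `cg(i,j)` of the grid `K_{m,n}`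
generated by the pairs `((i,j−1),(i,j))` and `((i−1,j),(i,j))`. -/
def cg (m n i j : ℕ) : Grid m n → Grid m n → Prop :=
  joinCongGen fun a b =>
    b = ((i : Fin (m + 1)), (j : Fin (n + 1))) ∧
      (a = ((i : Fin (m + 1)), ((j - 1 : ℕ) : Fin (n + 1))) ∨
        a = (((i - 1 : ℕ) : Fin (m + 1)), (j : Fin (n + 1))))

/-- The number of inversions of a permutation of `{1,…,h}` (represented as `Fin h`). -/
def invNum {h : ℕ} (π : Equiv.Perm (Fin h)) : ℕ :=
  (Finset.univ.filter fun p : Fin h × Fin h => p.1 < p.2 ∧ π p.2 < π p.1).card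

/-!
Every class of a join-congruence of a finite lattice is closed under joins, so it has a greatest
element, and the classes are counted by the elements `u` that are greatest in their class. For the
join-congruence generated by a relation `R` this happens exactly when `a ≤ u ↔ b ≤ u` for every
generating pair `(a, b)`, because that relation is itself a join-congruence. The generators of `β`
are the two edges into the corners `(i, π i)`; the condition then says that `u` is the top
`(h, h)` or a point `(i, π t)` with `i ≤ t` and `π t ≤ π i`, i.e. `i = t` or `(i, t)` is an
inversion of `π`.
-/

section JoinCong

variable {α : Type*} [SemilatticeSup α]

theorem isJoinCong_joinCongGen (R : α → α → Prop) : IsJoinCong (joinCongGen R) :=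
  ⟨⟨fun a _ hr _ => hr.1.refl a, fun hab r hr hR => hr.1.symm (hab r hr hR),
      fun hab hbc r hr hR => hr.1.trans (hab r hr hR) (hbc r hr hR)⟩,
    fun a b c hab r hr hR => hr.2 a b c (hab r hr hR)⟩

theorem joinCongGen_of_rel {R : α → α → Prop} {a b : α} (hab : R a b) : joinCongGen R a b :=
  fun _ _ hR => hR a b hab

theorem IsJoinCong.joinCongGen_le {R r : α → α → Prop} (hr : IsJoinCong r)
    (hR : ∀ a b, R a b → r a b) {a b : α} (hab : joinCongGen R a b) : r a b :=
  hab r hr hR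

theorem joinCongSup_joinCongGen {ι : Sort*} (R : ι → α → α → Prop) :
    joinCongSup (fun i => joinCongGen (R i)) = joinCongGen fun a b => ∃ i, R i a b := by
  ext a b
  constructor
  · refine (isJoinCong_joinCongGen _).joinCongGen_le fun x y ⟨i, hi⟩ => ?_
    exact (isJoinCong_joinCongGen _).joinCongGen_le (fun x y h => joinCongGen_of_rel ⟨i, h⟩) hi
  · exact (isJoinCong_joinCongGen _).joinCongGen_le fun x y ⟨i, hi⟩ =>
      joinCongGen_of_rel ⟨i, joinCongGen_of_rel hi⟩

theorem isJoinCong_le_iff_le (u : α) : IsJoinCong fun a b => (a ≤ u ↔ b ≤ u) :=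
  ⟨⟨fun _ => Iff.rfl, Iff.symm, Iff.trans⟩, fun a b c h => by simp only [sup_le_iff, h]⟩

theorem IsJoinCong.supClosed {r : α → α → Prop} (hr : IsJoinCong r) (u : α) :
    SupClosed {v | r u v} := by
  intro a ha b hb
  have hab : r (u ⊔ b) (a ⊔ b) := hr.2 _ _ _ ha
  have hbu : r (b ⊔ u) (u ⊔ u) := hr.2 _ _ _ (hr.1.symm hb)
  rw [sup_idem, sup_comm] at hbu
  exact hr.1.trans (hr.1.symm hbu) hab

theorem SupClosed.exists_isGreatest {s : Set α} (hs : SupClosed s) (hfin : s.Finite)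
    (hne : s.Nonempty) : ∃ g, IsGreatest s g := by
  obtain ⟨g, hg⟩ := hfin.exists_maximal hne
  exact ⟨g, hg.prop, fun v hv => hg.eq_of_le (hs hg.prop hv) le_sup_left ▸ le_sup_right⟩

theorem ncard_classes_eq_ncard_isGreatest [Finite α] {r : α → α → Prop} (hr : IsJoinCong r) :
    {C : Set α | ∃ a, C = {b | r a b}}.ncard = {u | IsGreatest {v | r u v} u}.ncard := by
  have hcls : {C : Set α | ∃ a, C = {b | r a b}} =
      (fun u => {b | r u b}) '' {u | IsGreatest {v | r u v} u} := by
    ext C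
    constructor
    · rintro ⟨a, rfl⟩
      obtain ⟨g, hag, hg⟩ := (hr.supClosed a).exists_isGreatest (Set.toFinite _) ⟨a, hr.1.refl a⟩
      have hcl : {b | r g b} = {b | r a b} :=
        Set.ext fun b => ⟨hr.1.trans hag, hr.1.trans (hr.1.symm hag)⟩
      refine ⟨g, ⟨hr.1.refl g, fun v hv => hg (hcl ▸ hv)⟩, hcl⟩
    · rintro ⟨u, -, rfl⟩
      exact ⟨u, rfl⟩
  rw [hcls, Set.InjOn.ncard_image]
  intro u hu v hv huv
  have hvu : r u v := (Set.ext_iff.mp huv v).mpr (hr.1.refl v)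
  exact le_antisymm (hv.2 (hr.1.symm hvu)) (hu.2 hvu)

theorem isGreatest_joinCongGen_iff {R : α → α → Prop} {u : α} :
    IsGreatest {v | joinCongGen R u v} u ↔ ∀ a b, R a b → (a ≤ u ↔ b ≤ u) := by
  have hr := isJoinCong_joinCongGen R
  constructor
  · rintro ⟨-, hu⟩ a b hab
    have hrel : joinCongGen R (a ⊔ u) (b ⊔ u) := hr.2 _ _ u (joinCongGen_of_rel hab)
    constructor
    · intro ha
      rw [sup_eq_right.2 ha] at hrel
      exact le_sup_left.trans (hu hrel)
    · intro hb
      rw [sup_eq_right.2 hb] at hrel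
      exact le_sup_left.trans (hu (hr.1.symm hrel))
  · intro hR
    exact ⟨hr.1.refl u, fun v huv => ((isJoinCong_le_iff_le u).joinCongGen_le hR huv).1 le_rfl⟩

end JoinCong

theorem cg_succ_succ (m n : ℕ) (i : Fin m) (j : Fin n) :
    cg m n (i.val + 1) (j.val + 1) = joinCongGen fun a b =>
      b = (i.succ, j.succ) ∧ (a = (i.succ, j.castSucc) ∨ a = (i.castSucc, j.succ)) := by
  simp only [cg, Nat.add_sub_cancel]
  rw [← Fin.val_succ i, ← Fin.val_succ j, ← Fin.val_castSucc i, ← Fin.val_castSucc j,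
    Fin.cast_val_eq_self, Fin.cast_val_eq_self, Fin.cast_val_eq_self, Fin.cast_val_eq_self]

theorem forall_cg_rel_le_iff {m n : ℕ} (i : Fin m) (j : Fin n) (u : Grid m n) :
    (∀ a b : Grid m n, b = (i.succ, j.succ) ∧
        (a = (i.succ, j.castSucc) ∨ a = (i.castSucc, j.succ)) → (a ≤ u ↔ b ≤ u)) ↔
      (u.2 = j.castSucc → u.1 ≤ i.castSucc) ∧ (u.1 = i.castSucc → u.2 ≤ j.castSucc) := by
  simp only [and_or_left, or_imp, forall_and, and_imp, forall_eq]
  obtain ⟨x, y⟩ := u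
  simp only [Prod.mk_le_mk, Fin.le_def, Fin.ext_iff, Fin.val_succ, Fin.val_castSucc]
  omega

section Count

variable {h : ℕ} (π : Equiv.Perm (Fin h))

theorem ncard_weak_inversions :
    {p : Fin h × Fin h | p.1 ≤ p.2 ∧ π p.2 ≤ π p.1}.ncard = h + invNum π := by
  have hsplit : {p : Fin h × Fin h | p.1 ≤ p.2 ∧ π p.2 ≤ π p.1} =
      Set.range (fun x => (x, x)) ∪ {p | p.1 < p.2 ∧ π p.2 < π p.1} := by
    ext ⟨x, y⟩
    simp only [Set.mem_ofPred_eq, Set.mem_union, Set.mem_range, Prod.mk.injEq]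
    constructor
    · rintro ⟨hxy, hπ⟩
      rcases hxy.eq_or_lt with rfl | hxy
      · exact Or.inl ⟨x, rfl, rfl⟩
      · exact Or.inr ⟨hxy, hπ.lt_of_ne (π.injective.ne hxy.ne')⟩
    · rintro (⟨x, rfl, rfl⟩ | ⟨hxy, hπ⟩)
      · exact ⟨le_rfl, le_rfl⟩
      · exact ⟨hxy.le, hπ.le⟩
  have hdisj : Disjoint (Set.range fun x : Fin h => (x, x)) {p | p.1 < p.2 ∧ π p.2 < π p.1} :=
    Set.disjoint_left.2 fun _ ⟨x, hx⟩ hlt => by subst hx; exact hlt.1.false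
  rw [hsplit, Set.ncard_union_eq hdisj,
    Set.ncard_range_of_injective fun x y h => congrArg Prod.fst h, Nat.card_eq_fintype_card,
    Fintype.card_fin, invNum, ← Set.ncard_coe_finset, Finset.coe_filter]
  simp

theorem setOf_perm_closed_eq :
    {u : Grid h h | ∀ s, (u.2 = (π s).castSucc → u.1 ≤ s.castSucc) ∧
        (u.1 = s.castSucc → u.2 ≤ (π s).castSucc)} =
      insert (Fin.last h, Fin.last h) ((fun p => (p.1.castSucc, (π p.2).castSucc)) ''
        {p : Fin h × Fin h | p.1 ≤ p.2 ∧ π p.2 ≤ π p.1}) := by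
  ext ⟨x, y⟩
  induction x using Fin.lastCases with
  | last =>
    induction y using Fin.lastCases with
    | last => simp [eq_comm (a := Fin.last h)]
    | cast y => simpa using ⟨π.symm y, by simp⟩
  | cast x =>
    induction y using Fin.lastCases with
    | last => simpa using ⟨x, by simp⟩
    | cast y =>
      simp only [Set.mem_insert_iff, Set.mem_image, Set.mem_ofPred_eq, Prod.mk.injEq,
        Fin.castSucc_inj, Fin.castSucc_ne_last, false_and, false_or, Prod.exists]
      constructor
      · intro hs
        exact ⟨x, π.symm y, ⟨(hs _).1 (by simp), by simpa using (hs x).2 rfl⟩, rfl, by simp⟩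
      · rintro ⟨_, t, ⟨hxt, hπ⟩, rfl, rfl⟩ s
        exact ⟨fun e => π.injective e ▸ hxt, fun e => e ▸ hπ⟩

theorem ncard_setOf_perm_closed :
    {u : Grid h h | ∀ s, (u.2 = (π s).castSucc → u.1 ≤ s.castSucc) ∧
        (u.1 = s.castSucc → u.2 ≤ (π s).castSucc)}.ncard = h + 1 + invNum π := by
  have hinj : Function.Injective fun p : Fin h × Fin h => (p.1.castSucc, (π p.2).castSucc) :=
    fun p q hpq => Prod.ext_iff.2 (by simpa using hpq)
  rw [setOf_perm_closed_eq, Set.ncard_insert_of_notMem, Set.ncard_image_of_injective _ hinj,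
    ncard_weak_inversions, add_right_comm]
  rintro ⟨p, -, hp⟩
  exact Fin.castSucc_ne_last _ (congrArg Prod.fst hp)

end Count

/-- For a permutation `π` of `{1,…,h}` (encoded on `Fin h`, the element `s` standing
for `s.val + 1`), the join `β` of the join-congruences `cg(i, π(i))`, `1 ≤ i ≤ h`, of
the grid `K_{h,h}` has exactly `h + 1 + inv(π)` equivalence classes. -/
theorem card_grid_quotient_perm (h : ℕ) (π : Equiv.Perm (Fin h)) :
    Set.ncard {C : Set (Grid h h) |
        ∃ a, C = {b |
          joinCongSup (fun s : Fin h => cg h h (s.val + 1) ((π s).val + 1)) a b}} =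
      h + 1 + invNum π := by
  simp only [cg_succ_succ, joinCongSup_joinCongGen]
  rw [ncard_classes_eq_ncard_isGreatest (isJoinCong_joinCongGen _), ← ncard_setOf_perm_closed π]
  congr! 3 with u
  rw [isGreatest_joinCongGen_iff]
  simp only [← forall_cg_rel_le_iff]
  exact ⟨fun H s a b hab => H a b ⟨s, hab⟩, fun H a b ⟨s, hab⟩ => H s a b hab⟩
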